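/- Let q ≥ 1 and M ≥ 2 be natural numbers, and let G be a connected simple graph on an infinite vertex type V such that every vertex of G has a finite neighbor set of cardinality at most q. Then there exist finitely many pairwise disjoint nonempty sets of vertices Λ₁, Λ₂, …, Λ_s whose union is V, each of which induces a connected subgraph of G, such that Λ₁ is finite, and such that every Λᵢ (1 ≤ i ≤ s) is either infinite or has cardinality at least M and at most 2qM². -/

import Mathlib

/-!
Grow a connected set `S` of `M` vertices one neighbour at a time. Every connected component of
`B \ S` contains a neighbour of `S`, so there are at most `q * M` of them. Absorbing into `S` the
components with fewer than `M` vertices gives a connected set `A` with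
`M ≤ |A| ≤ M + q M (M - 1) ≤ q M²`, and each remaining component has at least `M` vertices.
Applied to all of `V` this produces the finite part `Λ₁`; infinite components are kept whole and
finite ones are split in the same way, by strong induction on their size.
-/

open Set

lemma Set.Finite.ncard_biUnion_le_mul {α ι : Type*} {t : Set ι} (ht : t.Finite)
    (f : ι → Set α) {n : ℕ} (hf : ∀ i ∈ t, (f i).ncard ≤ n) : (⋃ i ∈ t, f i).ncard ≤ t.ncard * n :=
  calc (⋃ i ∈ t, f i).ncard = (⋃ i ∈ ht.toFinset, f i).ncard := by simp
    _ ≤ ∑ i ∈ ht.toFinset, (f i).ncard := Finset.set_ncard_biUnion_le _ _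
    _ ≤ ht.toFinset.card • n :=
      Finset.sum_le_card_nsmul _ _ _ fun i hi => hf i (by simpa using hi)
    _ = t.ncard * n := by rw [ncard_eq_toFinset_card t ht, smul_eq_mul]

lemma Set.Finite.exists_injective_range_eq_of_mem {α : Type*} {P : Set α} (hP : P.Finite)
    {a : α} (ha : a ∈ P) :
    ∃ (s : ℕ) (hs : 0 < s) (Λ : Fin s → α),
      Function.Injective Λ ∧ range Λ = P ∧ Λ ⟨0, hs⟩ = a := by
  have := hP.to_subtype
  have : Nonempty P := ⟨⟨a, ha⟩⟩
  let e := (Finite.equivFin P).symm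
  let σ := Equiv.swap ⟨0, Nat.card_pos⟩ (e.symm ⟨a, ha⟩)
  refine ⟨Nat.card P, Nat.card_pos, fun i => e (σ i), ?_, ?_,
    by simp only [σ, Equiv.swap_apply_left, Equiv.apply_symm_apply]⟩
  · exact Subtype.val_injective.comp (e.injective.comp σ.injective)
  · ext x
    refine ⟨by rintro ⟨i, rfl⟩; exact (e (σ i)).2, fun hx => ⟨σ.symm (e.symm ⟨x, hx⟩), ?_⟩⟩
    simp only [Equiv.apply_symm_apply]

namespace SimpleGraph

variable {V : Type*} {G : SimpleGraph V}

lemma connected_induce_singleton (v : V) : (G.induce {v}).Connected :=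
  Connected.of_subsingleton

lemma exists_adj_diff_of_connected_induce {B T : Set V} (hB : (G.induce B).Connected)
    (hTB : T ⊆ B) (hT : T.Nonempty) (hBT : (B \ T).Nonempty) :
    ∃ u ∈ T, ∃ w ∈ B \ T, G.Adj u w := by
  obtain ⟨x, hx⟩ := hT
  obtain ⟨y, hyB, hyT⟩ := hBT
  obtain ⟨p⟩ := hB.preconnected ⟨x, hTB hx⟩ ⟨y, hyB⟩
  obtain ⟨d, -, hd, hd'⟩ := p.exists_boundary_dart {z | z.1 ∈ T} hx hyT
  exact ⟨d.fst, hd, d.snd, ⟨d.snd.2, hd'⟩, d.adj⟩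

lemma connected_induce_image_val {X : Set V} {T : Set X}
    (hT : ((G.induce X).induce T).Connected) :
    (G.induce (Subtype.val '' T)).Connected :=
  hT.map ⟨fun t => ⟨t.1.1, t.1, t.2, rfl⟩, fun h => h⟩
    (by rintro ⟨_, x, hx, rfl⟩; exact ⟨⟨x, hx⟩, rfl⟩)

lemma ConnectedComponent.connected_induce_image_val_supp {X : Set V}
    (c : (G.induce X).ConnectedComponent) : (G.induce (Subtype.val '' c.supp)).Connected :=
  connected_induce_image_val c.connected_toSimpleGraph

lemma exists_connected_induce_subset_encard_eq {B : Set V} (hB : (G.induce B).Connected)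
    {m : ℕ} (hm : 0 < m) (hmB : (m : ℕ∞) ≤ B.encard) :
    ∃ S ⊆ B, S.encard = m ∧ (G.induce S).Connected := by
  induction m, hm using Nat.le_induction with
  | base =>
    obtain ⟨⟨b, hb⟩⟩ := hB.nonempty
    exact ⟨{b}, singleton_subset_iff.2 hb, by simp, connected_induce_singleton b⟩
  | succ m _ ih =>
    obtain ⟨S, hSB, hSm, hS⟩ := ih (le_trans (by simp) hmB)
    have hBS : (B \ S).Nonempty := by
      refine sdiff_nonempty.2 fun hBS => ?_
      have := hmB.trans ((encard_le_encard hBS).trans_eq hSm)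
      norm_cast at this
      omega
    obtain ⟨u, hu, w, ⟨hwB, hwS⟩, hadj⟩ :=
      exists_adj_diff_of_connected_induce hB hSB (nonempty_coe_sort.1 hS.nonempty) hBS
    refine ⟨insert w S, insert_subset hwB hSB, by rw [encard_insert_of_notMem hwS, hSm]; rfl, ?_⟩
    rw [insert_eq, union_comm]
    exact connected_induce_union hS.preconnected (connected_induce_singleton w).preconnected
      hu rfl hadj

lemma connected_induce_union_biUnion {ι : Type*} {S : Set V} (hS : (G.induce S).Connected)
    (t : Set ι) (f : ι → Set V)
    (hf : ∀ i ∈ t, (G.induce (f i)).Connected ∧ ∃ u ∈ f i, ∃ w ∈ S, G.Adj u w) :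
    (G.induce (S ∪ ⋃ i ∈ t, f i)).Connected := by
  obtain ⟨⟨s, hs⟩⟩ := hS.nonempty
  refine induce_connected_of_patches s (Or.inl hs) fun {v} hv => ?_
  obtain ⟨T, hTA, hST, hvT, hT⟩ :
      ∃ T ⊆ S ∪ ⋃ i ∈ t, f i, S ⊆ T ∧ v ∈ T ∧ (G.induce T).Connected := by
    rcases hv with hv | hv
    · exact ⟨S, subset_union_left, subset_rfl, hv, hS⟩
    · obtain ⟨i, hi, hvi⟩ := mem_iUnion₂.1 hv
      obtain ⟨hfi, u, hu, w, hw, hadj⟩ := hf i hi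
      refine ⟨f i ∪ S, union_subset (subset_union_of_subset_right (subset_biUnion_of_mem hi) _)
        subset_union_left, subset_union_right, Or.inl hvi, ?_⟩
      exact connected_induce_union hfi.preconnected hS.preconnected hu hw hadj
  exact ⟨T, hTA, hST hs, hvT, hT.preconnected _ _⟩

section Components

variable {B S : Set V}

lemma exists_adj_of_connectedComponent_induce_diff (hB : (G.induce B).Connected) (hSB : S ⊆ B)
    (hS : S.Nonempty) (c : (G.induce (B \ S)).ConnectedComponent) :
    ∃ u ∈ Subtype.val '' c.supp, ∃ w ∈ S, G.Adj u w := by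
  obtain ⟨s, hs⟩ := hS
  have hcB : Subtype.val '' c.supp ⊆ B := by rintro _ ⟨x, -, rfl⟩; exact x.2.1
  have hsc : s ∈ B \ Subtype.val '' c.supp := ⟨hSB hs, by rintro ⟨x, -, rfl⟩; exact x.2.2 hs⟩
  obtain ⟨_, ⟨x, hx, rfl⟩, w, ⟨hwB, hwc⟩, hadj⟩ :=
    exists_adj_diff_of_connected_induce hB hcB (c.nonempty_supp.image _) ⟨s, hsc⟩
  refine ⟨x, mem_image_of_mem _ hx, w, ?_, hadj⟩
  by_contra hwS
  -- a neighbour of `c` outside `S` would lie in `c`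
  have hadj' : (G.induce (B \ S)).Adj x ⟨w, hwB, hwS⟩ := hadj
  exact hwc ⟨_, (c.mem_supp_congr_adj hadj').1 hx, rfl⟩

lemma exists_injective_connectedComponent_induce_diff (hB : (G.induce B).Connected)
    (hSB : S ⊆ B) (hS : S.Nonempty) :
    ∃ f : (G.induce (B \ S)).ConnectedComponent → ⋃ s ∈ S, G.neighborSet s,
      Function.Injective f := by
  choose u hu w hw hadj using exists_adj_of_connectedComponent_induce_diff hB hSB hS
  refine ⟨fun c => ⟨u c, mem_biUnion (hw c) (hadj c).symm⟩, fun c c' h => ?_⟩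
  obtain ⟨x, hx, hxc⟩ := hu c
  obtain ⟨x', hx', hxc'⟩ := hu c'
  have hxx' : x = x' := Subtype.ext (hxc.trans ((congrArg Subtype.val h).trans hxc'.symm))
  rw [ConnectedComponent.mem_supp_iff] at hx hx'
  rw [← hx, ← hx', hxx']

lemma finite_connectedComponent_induce_diff (hB : (G.induce B).Connected) (hSB : S ⊆ B)
    (hS : S.Nonempty) (hSfin : S.Finite) (hfin : ∀ v, (G.neighborSet v).Finite) :
    Finite (G.induce (B \ S)).ConnectedComponent :=
  have := (hSfin.biUnion fun s _ => hfin s).to_subtype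
  have ⟨f, hf⟩ := exists_injective_connectedComponent_induce_diff hB hSB hS
  Finite.of_injective f hf

lemma card_connectedComponent_induce_diff_le {q : ℕ} (hB : (G.induce B).Connected)
    (hSB : S ⊆ B) (hS : S.Nonempty) (hSfin : S.Finite) (hfin : ∀ v, (G.neighborSet v).Finite)
    (hdeg : ∀ v, (G.neighborSet v).ncard ≤ q) :
    Nat.card (G.induce (B \ S)).ConnectedComponent ≤ S.ncard * q := by
  have := (hSfin.biUnion fun s _ => hfin s).to_subtype
  obtain ⟨f, hf⟩ := exists_injective_connectedComponent_induce_diff hB hSB hS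
  calc _ ≤ Nat.card (⋃ s ∈ S, G.neighborSet s) := Nat.card_le_card_of_injective f hf
    _ = (⋃ s ∈ S, G.neighborSet s).ncard := Nat.card_coe_set_eq _
    _ ≤ S.ncard * q := hSfin.ncard_biUnion_le_mul _ fun s _ => hdeg s

end Components

variable {M q : ℕ}

lemma exists_bounded_connected_subset_and_large_pieces (hM : 0 < M) (hq : 0 < q)
    (hfin : ∀ v, (G.neighborSet v).Finite) (hdeg : ∀ v, (G.neighborSet v).ncard ≤ q)
    {B : Set V} (hB : (G.induce B).Connected) (hMB : (M : ℕ∞) ≤ B.encard) :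
    ∃ A ⊆ B, (G.induce A).Connected ∧ A.Finite ∧ M ≤ A.ncard ∧ A.ncard ≤ q * M ^ 2 ∧
      ∃ 𝒞 : Set (Set V), 𝒞.Finite ∧ 𝒞.PairwiseDisjoint id ∧ ⋃₀ 𝒞 = B \ A ∧
        ∀ C ∈ 𝒞, (G.induce C).Connected ∧ (M : ℕ∞) ≤ C.encard := by
  obtain ⟨S, hSB, hSM, hS⟩ := exists_connected_induce_subset_encard_eq hB hM hMB
  have hSfin : S.Finite := finite_of_encard_eq_coe hSM
  have hSne : S.Nonempty := nonempty_coe_sort.1 hS.nonempty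
  have hSncard : S.ncard = M := by exact_mod_cast hSfin.cast_ncard_eq.trans hSM
  have := finite_connectedComponent_induce_diff hB hSB hSne hSfin hfin
  have hcomps := card_connectedComponent_induce_diff_le hB hSB hSne hSfin hfin hdeg
  set comp : (G.induce (B \ S)).ConnectedComponent → Set V := fun c => Subtype.val '' c.supp
  have hcompB : ∀ c, comp c ⊆ B := by rintro c _ ⟨x, -, rfl⟩; exact x.2.1
  set small := {c | (comp c).encard < M}
  have hsmall : ∀ c ∈ small, (comp c).Finite ∧ (comp c).ncard ≤ M - 1 := by
    intro c hc
    have hfin : (comp c).Finite := encard_lt_top_iff.1 (hc.trans (WithTop.coe_lt_top _))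
    refine ⟨hfin, Nat.le_sub_one_of_lt ?_⟩
    exact_mod_cast hfin.cast_ncard_eq.trans_lt hc
  set A := S ∪ ⋃ c ∈ small, comp c
  have hAfin : A.Finite := hSfin.union ((toFinite small).biUnion fun c hc => (hsmall c hc).1)
  refine ⟨A, union_subset hSB (iUnion₂_subset fun c _ => hcompB c), ?_, hAfin, ?_, ?_,
    comp '' smallᶜ, (toFinite _).image comp, ?_, ?_, ?_⟩
  · exact connected_induce_union_biUnion hS small comp fun c _ =>
      ⟨c.connected_induce_image_val_supp,
        exists_adj_of_connectedComponent_induce_diff hB hSB hSne c⟩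
  · exact hSncard ▸ ncard_le_ncard subset_union_left hAfin
  · obtain ⟨m, rfl⟩ := Nat.exists_eq_add_one_of_ne_zero hM.ne'
    calc A.ncard ≤ S.ncard + (⋃ c ∈ small, comp c).ncard := ncard_union_le _ _
      _ ≤ (m + 1) + ((m + 1) * q) * m := by
        refine add_le_add hSncard.le ?_
        calc _ ≤ small.ncard * m :=
              (toFinite small).ncard_biUnion_le_mul _ fun c hc => (hsmall c hc).2
          _ ≤ _ := Nat.mul_le_mul_right _ ((ncard_le_card small).trans (hSncard ▸ hcomps))
      _ ≤ q * (m + 1) ^ 2 := by nlinarith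
  · rintro _ ⟨c, -, rfl⟩ _ ⟨c', -, rfl⟩ hne
    exact (disjoint_image_iff Subtype.val_injective).2
      (pairwise_disjoint_supp_connectedComponent _ fun h => hne (h ▸ rfl))
  · ext x
    simp only [sUnion_image, mem_iUnion, mem_sdiff, mem_union, not_or, exists_prop, A]
    constructor
    · rintro ⟨c, hcs, y, hy, rfl⟩
      refine ⟨y.2.1, y.2.2, ?_⟩
      rintro ⟨c', hc', y', hy', hyy'⟩
      rw [Subtype.ext hyy', ConnectedComponent.mem_supp_iff] at hy'
      rw [ConnectedComponent.mem_supp_iff] at hy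
      exact hcs (by rwa [← hy, hy'])
    · rintro ⟨hxB, hxS, hx⟩
      have hx' : x ∈ B \ S := ⟨hxB, hxS⟩
      exact ⟨_, fun hc => hx ⟨_, hc, ⟨x, hx'⟩, rfl, rfl⟩, ⟨x, hx'⟩, rfl, rfl⟩
  · rintro _ ⟨c, hc, rfl⟩
    exact ⟨c.connected_induce_image_val_supp, not_lt.1 hc⟩

variable (G) in
structure IsConnectedPartition (M K : ℕ) (B : Set V) (P : Set (Set V)) : Prop where
  finite : P.Finite
  pairwiseDisjoint : P.PairwiseDisjoint id
  sUnion_eq : ⋃₀ P = B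
  connected : ∀ C ∈ P, (G.induce C).Connected
  infinite_or_card : ∀ C ∈ P, C.Infinite ∨ M ≤ C.ncard ∧ C.ncard ≤ K

lemma isConnectedPartition_singleton {M K : ℕ} {B : Set V} (hB : (G.induce B).Connected)
    (hBcard : B.Infinite ∨ M ≤ B.ncard ∧ B.ncard ≤ K) : IsConnectedPartition G M K B {B} where
  finite := finite_singleton B
  pairwiseDisjoint := pairwiseDisjoint_singleton B id
  sUnion_eq := sUnion_singleton B
  connected := by rintro _ rfl; exact hB
  infinite_or_card := by rintro _ rfl; exact hBcard

namespace IsConnectedPartition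

variable {M K : ℕ} {A B : Set V} {P : Set (Set V)}

lemma subset_of_mem (h : IsConnectedPartition G M K B P) {C : Set V} (hC : C ∈ P) : C ⊆ B :=
  h.sUnion_eq ▸ subset_sUnion_of_mem hC

lemma insert (h : IsConnectedPartition G M K (B \ A) P) (hAB : A ⊆ B)
    (hA : (G.induce A).Connected) (hAcard : A.Infinite ∨ M ≤ A.ncard ∧ A.ncard ≤ K) :
    IsConnectedPartition G M K B (insert A P) where
  finite := h.finite.insert A
  pairwiseDisjoint := h.pairwiseDisjoint.insert fun C hC _ =>
    disjoint_sdiff_right.mono_right (h.subset_of_mem hC)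
  sUnion_eq := by rw [sUnion_insert, h.sUnion_eq, union_sdiff_cancel hAB]
  connected := forall_mem_insert.2 ⟨hA, h.connected⟩
  infinite_or_card := forall_mem_insert.2 ⟨hAcard, h.infinite_or_card⟩

lemma biUnion {𝒞 : Set (Set V)} (h𝒞 : 𝒞.Finite) (hdisj : 𝒞.PairwiseDisjoint id)
    {P : Set V → Set (Set V)} (hP : ∀ C ∈ 𝒞, IsConnectedPartition G M K C (P C)) :
    IsConnectedPartition G M K (⋃₀ 𝒞) (⋃ C ∈ 𝒞, P C) where
  finite := h𝒞.biUnion fun C hC => (hP C hC).finite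
  pairwiseDisjoint := by
    refine PairwiseDisjoint.biUnion ?_ fun C hC => (hP C hC).pairwiseDisjoint
    intro C hC C' hC' hne
    change Disjoint (⋃ D ∈ P C, D) (⋃ D ∈ P C', D)
    rw [← sUnion_eq_biUnion, ← sUnion_eq_biUnion, (hP C hC).sUnion_eq, (hP C' hC').sUnion_eq]
    exact hdisj hC hC' hne
  sUnion_eq := by
    simp only [sUnion_iUnion]
    exact (iUnion₂_congr fun C hC => (hP C hC).sUnion_eq).trans sUnion_eq_biUnion.symm
  connected := by
    simp only [mem_iUnion₂]
    rintro D ⟨C, hC, hD⟩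
    exact (hP C hC).connected D hD
  infinite_or_card := by
    simp only [mem_iUnion₂]
    rintro D ⟨C, hC, hD⟩
    exact (hP C hC).infinite_or_card D hD

end IsConnectedPartition

theorem exists_isConnectedPartition (hM : 0 < M) (hq : 0 < q)
    (hfin : ∀ v, (G.neighborSet v).Finite) (hdeg : ∀ v, (G.neighborSet v).ncard ≤ q)
    {B : Set V} (hB : (G.induce B).Connected) (hMB : (M : ℕ∞) ≤ B.encard) :
    ∃ P, IsConnectedPartition G M (q * M ^ 2) B P := by
  induction hn : B.ncard using Nat.strong_induction_on generalizing B with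
  | _ n ih =>
  rcases B.finite_or_infinite with hBfin | hBinf
  swap
  · exact ⟨{B}, isConnectedPartition_singleton hB (Or.inl hBinf)⟩
  by_cases hBK : B.ncard ≤ q * M ^ 2
  · have hMB' : M ≤ B.ncard := by exact_mod_cast hMB.trans_eq hBfin.cast_ncard_eq.symm
    exact ⟨{B}, isConnectedPartition_singleton hB (Or.inr ⟨hMB', hBK⟩)⟩
  · obtain ⟨A, hAB, hA, -, hAM, hAK, 𝒞, h𝒞, hdisj, hunion, h𝒞C⟩ :=
      exists_bounded_connected_subset_and_large_pieces hM hq hfin hdeg hB hMB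
    have hlt : ∀ C ∈ 𝒞, C.ncard < n := by
      intro C hC
      obtain ⟨a, ha⟩ : A.Nonempty := nonempty_of_ncard_ne_zero (hAM.trans_lt' hM).ne'
      have hCB : C ⊆ B \ A := hunion ▸ subset_sUnion_of_mem hC
      exact hn ▸ ncard_lt_ncard (ssubset_of_subset_not_subset (hCB.trans sdiff_subset)
        fun hBC => (hCB (hBC (hAB ha))).2 ha) hBfin
    choose! P hP using fun C hC => ih _ (hlt C hC) (h𝒞C C hC).1 (h𝒞C C hC).2 rfl
    have := IsConnectedPartition.biUnion h𝒞 hdisj hP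
    rw [hunion] at this
    exact ⟨_, this.insert hAB hA (Or.inr ⟨hAM, hAK⟩)⟩

end SimpleGraph

theorem split_infinite_connected_graph
    {V : Type} [Infinite V] (G : SimpleGraph V) (q M : ℕ)
    (hq : 1 ≤ q) (hM : 2 ≤ M)
    (hconn : G.Connected)
    (hfin : ∀ v : V, (G.neighborSet v).Finite)
    (hdeg : ∀ v : V, Nat.card (G.neighborSet v) ≤ q) :
    ∃ (s : ℕ) (hs : 0 < s) (Λ : Fin s → Set V),
      (∀ i, (Λ i).Nonempty) ∧
      (Pairwise (Function.onFun Disjoint Λ)) ∧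
      (⋃ i, Λ i) = Set.univ ∧
      (∀ i, (G.induce (Λ i)).Connected) ∧
      (Λ ⟨0, hs⟩).Finite ∧
      (∀ i, (Λ i).Infinite ∨
        (M ≤ Nat.card (Λ i) ∧ Nat.card (Λ i) ≤ 2 * q * M ^ 2)) := by
  simp only [Nat.card_coe_set_eq] at hdeg ⊢
  have hM : 0 < M := by omega
  obtain ⟨A, -, hA, hAfin, hAM, hAK, 𝒞, h𝒞, hdisj, hunion, h𝒞C⟩ :=
    SimpleGraph.exists_bounded_connected_subset_and_large_pieces hM hq hfin hdeg
      (G.induceUnivIso.connected_iff.2 hconn) (by simp [infinite_univ.encard_eq])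
  choose! P hP using fun C hC =>
    SimpleGraph.exists_isConnectedPartition hM hq hfin hdeg (h𝒞C C hC).1 (h𝒞C C hC).2
  have hrest := SimpleGraph.IsConnectedPartition.biUnion h𝒞 hdisj hP
  rw [hunion] at hrest
  have hpart := hrest.insert (subset_univ A) hA (Or.inr ⟨hAM, hAK⟩)
  obtain ⟨s, hs, Λ, hΛ, hΛP, hΛA⟩ :=
    hpart.finite.exists_injective_range_eq_of_mem (mem_insert A _)
  have hmem : ∀ i, Λ i ∈ insert A _ := fun i => hΛP ▸ mem_range_self i
  refine ⟨s, hs, Λ, fun i => nonempty_coe_sort.1 (hpart.connected _ (hmem i)).nonempty,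
    hpart.pairwiseDisjoint.on_injective hΛ hmem, by rw [← sUnion_range, hΛP, hpart.sUnion_eq],
    fun i => hpart.connected _ (hmem i), hΛA ▸ hAfin, fun i => ?_⟩
  refine (hpart.infinite_or_card _ (hmem i)).imp_right fun h => ⟨h.1, h.2.trans ?_⟩
  nlinarith
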